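/- Let P and S be languages over Σ and Σuo ⊆ Σuc ⊆ Σ. If the equation P ∩ X = S has a prefix-closed solution under partial controllability and observability, then it has a largest one: there exists a prefix-closed language M with P ∩ M = S and P ∩ Ext(Fold(M)) = S such that every prefix-closed language C with P ∩ C = S and P ∩ Ext(Fold(C)) = S satisfies C ⊆ M. -/
import Mathlib


/-!
Supervisory control via language equation solving: common definitions.
A language over alphabet `α` is a set of finite words `Set (List α)`.
-/

variable {α : Type*}

/-- Prefix closure of a language: `Init(L) = {u | ∃ v, u ++ v ∈ L}`. -/
def InitL (L : Set (List α)) : Set (List α) := {u | ∃ v, u ++ v ∈ L}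

/-- A language is prefix-closed if it contains its prefix closure. -/
def IsPrefixClosed (L : Set (List α)) : Prop := InitL L ⊆ L

/-- `M^pref`: the largest prefix-closed sublanguage of `M`. -/
def prefCl (M : Set (List α)) : Set (List α) := {w | w ∈ M ∧ ∀ p : List α, p <+: w → p ∈ M}

/-- The partial trace map `tr_L` for the `Σuc`-extension, as a graph relation:
`Tr L Suc w t` means `tr_L(w)` is defined and equals `t`. -/
inductive Tr (L : Set (List α)) (Suc : Set α) : List α → List α → Prop
  | nil : Tr L Suc [] []
  | keep {p t : List α} {a : α} : Tr L Suc p t → t ++ [a] ∈ L → Tr L Suc (p ++ [a]) (t ++ [a])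
  | drop {p t : List α} {a : α} : Tr L Suc p t → t ++ [a] ∉ L → a ∈ Suc → Tr L Suc (p ++ [a]) t

/-- `Σuc`-extension of a language: `Ext(L) = {w | tr_L(w) is defined}`. -/
def ExtL (L : Set (List α)) (Suc : Set α) : Set (List α) := {w | ∃ t, Tr L Suc w t}

open Classical in
/-- `π`: erase all letters of `Suo` from a word. -/
noncomputable def proj (Suo : Set α) : List α → List α
  | [] => []
  | a :: w => if a ∈ Suo then proj Suo w else a :: proj Suo w

/-- `Σuo`-folding of a language. -/
def Fold (Suo : Set α) (L : Set (List α)) : Set (List α) :=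
  {w | proj Suo w ∈ L ∧ ∀ (p : List α) (a : α), p ++ [a] <+: w → a ∈ Suo → proj Suo p ++ [a] ∈ L}

/-- `Real(L)` for a nonempty prefix-closed language `L`. -/
def RealL (Suo : Set α) (L : Set (List α)) : Set (List α) :=
  {w | ∀ (p q : List α) (a : α), w = p ++ [a] ++ q →
    ∃ u : List α, proj Suo u = proj Suo p ∧ u ++ [a] ∈ L}

/-- Concatenation of languages. -/
def conc (L M : Set (List α)) : Set (List α) := {w | ∃ u ∈ L, ∃ v ∈ M, w = u ++ v}

/-- `A*`: all words whose letters all lie in the subalphabet `A`. -/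
def ucStar (A : Set α) : Set (List α) := {w | ∀ a ∈ w, a ∈ A}


section Aux

variable {Suo Suc : Set α} {L C P S : Set (List α)}

@[simp] lemma proj_nil : proj Suo ([] : List α) = [] := rfl

lemma proj_cons_mem {a : α} (h : a ∈ Suo) (w : List α) :
    proj Suo (a :: w) = proj Suo w := by
  rw [proj, if_pos h]

lemma proj_cons_not_mem {a : α} (h : a ∉ Suo) (w : List α) :
    proj Suo (a :: w) = a :: proj Suo w := by
  rw [proj, if_neg h]

lemma proj_singleton_mem {a : α} (h : a ∈ Suo) : proj Suo [a] = [] := by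
  rw [proj_cons_mem h, proj_nil]

lemma proj_singleton_not_mem {a : α} (h : a ∉ Suo) : proj Suo [a] = [a] := by
  rw [proj_cons_not_mem h, proj_nil]

lemma proj_append (u v : List α) :
    proj Suo (u ++ v) = proj Suo u ++ proj Suo v := by
  induction u with
  | nil => simp
  | cons a u ih =>
    by_cases h : a ∈ Suo
    · rw [List.cons_append, proj_cons_mem h, proj_cons_mem h, ih]
    · rw [List.cons_append, proj_cons_not_mem h, proj_cons_not_mem h, ih,
        List.cons_append]

lemma proj_snoc_mem {a : α} (h : a ∈ Suo) (w : List α) :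
    proj Suo (w ++ [a]) = proj Suo w := by
  rw [proj_append, proj_singleton_mem h, List.append_nil]

lemma proj_snoc_not_mem {a : α} (h : a ∉ Suo) (w : List α) :
    proj Suo (w ++ [a]) = proj Suo w ++ [a] := by
  rw [proj_append, proj_singleton_not_mem h]

lemma length_proj_le (w : List α) : (proj Suo w).length ≤ w.length := by
  induction w with
  | nil => simp
  | cons a w ih =>
    by_cases h : a ∈ Suo
    · rw [proj_cons_mem h]; simp; omega
    · rw [proj_cons_not_mem h]; simpa using ih

lemma proj_eq_self_of_forall {w : List α} (h : ∀ a ∈ w, a ∉ Suo) : proj Suo w = w := by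
  induction w with
  | nil => rfl
  | cons a w ih =>
    rw [proj_cons_not_mem (h a (by simp)), ih fun b hb => h b (by simp [hb])]

lemma forall_of_proj_eq_self {w : List α} (h : proj Suo w = w) : ∀ a ∈ w, a ∉ Suo := by
  induction w with
  | nil => simp
  | cons a w ih =>
    by_cases ha : a ∈ Suo
    · exfalso
      rw [proj_cons_mem ha] at h
      have h1 := length_proj_le (Suo := Suo) w
      have h2 : (proj Suo w).length = w.length + 1 := by rw [h]; simp
      omega
    · rw [proj_cons_not_mem ha] at h
      have hw : proj Suo w = w := by injection h
      intro b hb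
      rcases List.mem_cons.1 hb with rfl | hb
      · exact ha
      · exact ih hw b hb

lemma not_mem_Suo_of_mem_proj {w : List α} : ∀ a ∈ proj Suo w, a ∉ Suo := by
  induction w with
  | nil => simp
  | cons b w ih =>
    by_cases hb : b ∈ Suo
    · rw [proj_cons_mem hb]; exact ih
    · rw [proj_cons_not_mem hb]
      intro a ha
      rcases List.mem_cons.1 ha with rfl | ha
      · exact hb
      · exact ih a ha

lemma proj_proj (w : List α) : proj Suo (proj Suo w) = proj Suo w :=
  proj_eq_self_of_forall not_mem_Suo_of_mem_proj

lemma obs_of_prefix {x y : List α} (h : x <+: y) (hy : proj Suo y = y) :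
    proj Suo x = x :=
  proj_eq_self_of_forall fun a ha => forall_of_proj_eq_self hy a (h.subset ha)

lemma snoc_obs {p : List α} {a : α} (h : proj Suo (p ++ [a]) = p ++ [a]) :
    proj Suo p = p ∧ a ∉ Suo := by
  have := forall_of_proj_eq_self h
  exact ⟨proj_eq_self_of_forall fun b hb => this b (by simp [hb]),
    this a (by simp)⟩

lemma snoc_inj {p t : List α} {a b : α} (h : p ++ [a] = t ++ [b]) :
    p = t ∧ a = b := by
  obtain ⟨h1, h2⟩ := List.append_inj' h rfl
  exact ⟨h1, by simpa using h2⟩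

lemma prefix_snoc {u w : List α} {a : α} (h : u <+: w ++ [a]) :
    u <+: w ∨ u = w ++ [a] := by
  obtain ⟨v, hv⟩ := h
  rcases List.eq_nil_or_concat v with rfl | ⟨v', b, rfl⟩
  · right; simpa using hv
  · left
    rw [List.concat_eq_append, ← List.append_assoc] at hv
    obtain ⟨h1, -⟩ := List.append_inj' hv rfl
    exact ⟨v', h1⟩

/-! ### Basic lemmas about the trace relation -/

lemma tr_nil_inv {t : List α} (h : Tr L Suc ([] : List α) t) : t = [] := by
  generalize hw : ([] : List α) = w at h
  cases h with
  | nil => rfl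
  | keep h hmem => simp at hw
  | drop h hnot hS => simp at hw

lemma tr_snoc {x t : List α} {a : α} (h : Tr L Suc (x ++ [a]) t) :
    ∃ s, Tr L Suc x s ∧
      ((t = s ++ [a] ∧ s ++ [a] ∈ L) ∨ (t = s ∧ s ++ [a] ∉ L ∧ a ∈ Suc)) := by
  generalize hw : x ++ [a] = w at h
  cases h with
  | @keep p s b h hmem =>
    obtain ⟨rfl, rfl⟩ := snoc_inj hw
    exact ⟨s, h, Or.inl ⟨rfl, hmem⟩⟩
  | @drop p s b h hnot hS =>
    obtain ⟨rfl, rfl⟩ := snoc_inj hw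
    exact ⟨t, h, Or.inr ⟨rfl, hnot, hS⟩⟩
  | nil => simp at hw

lemma tr_prefix (q : List α) : ∀ {p t : List α}, Tr L Suc (p ++ q) t →
    ∃ s, Tr L Suc p s := by
  induction q using List.reverseRecOn with
  | nil => exact fun {p t} h => ⟨t, by simpa using h⟩
  | append_singleton q b ih =>
    intro p t h
    rw [← List.append_assoc] at h
    obtain ⟨s, hs, -⟩ := tr_snoc h
    exact ih hs

lemma tr_ext {w t : List α} (h : Tr L Suc w t) (v : List α)
    (hv : ∀ b ∈ v, b ∈ Suc) : ∃ t', Tr L Suc (w ++ v) t' := by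
  induction v using List.reverseRecOn with
  | nil => exact ⟨t, by simpa using h⟩
  | append_singleton v b ih =>
    obtain ⟨t', ht'⟩ := ih fun c hc => hv c (by simp [hc])
    rw [← List.append_assoc]
    by_cases hm : t' ++ [b] ∈ L
    · exact ⟨t' ++ [b], Tr.keep ht' hm⟩
    · exact ⟨t', Tr.drop ht' hm (hv b (by simp))⟩

lemma tr_self (hL : IsPrefixClosed L) :
    ∀ {w : List α}, w ∈ L → Tr L Suc w w := by
  intro w
  induction w using List.reverseRecOn with
  | nil => exact fun _ => Tr.nil
  | append_singleton p a ih =>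
    intro hw
    exact Tr.keep (ih (hL ⟨[a], hw⟩)) hw

/-! ### Fold lemmas -/

lemma fold_snoc_mem_of {t : List α} {a : α} (ha : a ∉ Suo)
    (h : t ++ [a] ∈ Fold Suo C) : proj Suo t ++ [a] ∈ C := by
  have h1 := h.1
  rwa [proj_snoc_not_mem ha] at h1

lemma fold_snoc_mem {t : List α} {a : α} (ha : a ∉ Suo)
    (ht : t ∈ Fold Suo C ∨ t = []) (h : proj Suo t ++ [a] ∈ C) :
    t ++ [a] ∈ Fold Suo C := by
  constructor
  · rwa [proj_snoc_not_mem ha]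
  · intro p b hpb hb
    rcases prefix_snoc hpb with hp | hp
    · rcases ht with ht | rfl
      · exact ht.2 p b hp hb
      · exact absurd hp.length_le (by simp)
    · obtain ⟨rfl, rfl⟩ := snoc_inj hp
      exact absurd hb ha

/-! ### The key reduction: `Ext (Fold C)` via projections -/

lemma tr_fold_forward {w t : List α} (h : Tr (Fold Suo C) Suc w t) :
    Tr C Suc (proj Suo w) (proj Suo t) ∧ (t ∈ Fold Suo C ∨ t = []) := by
  induction h with
  | nil => exact ⟨Tr.nil, Or.inr rfl⟩
  | @keep p s a h hmem ih =>
    refine ⟨?_, Or.inl hmem⟩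
    by_cases ha : a ∈ Suo
    · rw [proj_snoc_mem ha, proj_snoc_mem ha]
      exact ih.1
    · rw [proj_snoc_not_mem ha, proj_snoc_not_mem ha]
      exact Tr.keep ih.1 (fold_snoc_mem_of ha hmem)
  | @drop p s a h hnot hS ih =>
    refine ⟨?_, ih.2⟩
    by_cases ha : a ∈ Suo
    · rw [proj_snoc_mem ha]
      exact ih.1
    · rw [proj_snoc_not_mem ha]
      exact Tr.drop ih.1 (fun hC => hnot (fold_snoc_mem ha ih.2 hC)) hS

lemma tr_fold_backward (hsub : Suo ⊆ Suc) (w : List α) :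
    ∀ t', Tr C Suc (proj Suo w) t' →
      ∃ t, Tr (Fold Suo C) Suc w t ∧ proj Suo t = t' ∧
        (t ∈ Fold Suo C ∨ t = []) := by
  induction w using List.reverseRecOn with
  | nil =>
    intro t' h
    have ht' : t' = [] := tr_nil_inv (by simpa using h)
    exact ⟨[], Tr.nil, by simp [ht'], Or.inr rfl⟩
  | append_singleton w a ih =>
    intro t' h
    by_cases ha : a ∈ Suo
    · rw [proj_snoc_mem ha] at h
      obtain ⟨t, htr, hpt, hinv⟩ := ih t' h
      by_cases hm : t ++ [a] ∈ Fold Suo C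
      · exact ⟨t ++ [a], Tr.keep htr hm, by rw [proj_snoc_mem ha, hpt], Or.inl hm⟩
      · exact ⟨t, Tr.drop htr hm (hsub ha), hpt, hinv⟩
    · rw [proj_snoc_not_mem ha] at h
      obtain ⟨s, hs, hcase⟩ := tr_snoc h
      obtain ⟨t, htr, hpt, hinv⟩ := ih s hs
      rcases hcase with ⟨rfl, hmem⟩ | ⟨rfl, hnot, haS⟩
      · have hm : t ++ [a] ∈ Fold Suo C :=
          fold_snoc_mem ha hinv (by rw [hpt]; exact hmem)
        exact ⟨t ++ [a], Tr.keep htr hm,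
          by rw [proj_snoc_not_mem ha, hpt], Or.inl hm⟩
      · have hm : t ++ [a] ∉ Fold Suo C := fun hmem =>
          hnot (by rw [← hpt]; exact fold_snoc_mem_of ha hmem)
        exact ⟨t, Tr.drop htr hm haS, hpt, hinv⟩

lemma extFold_iff (hsub : Suo ⊆ Suc) (w : List α) :
    w ∈ ExtL (Fold Suo C) Suc ↔ proj Suo w ∈ ExtL C Suc := by
  constructor
  · rintro ⟨t, ht⟩
    exact ⟨proj Suo t, (tr_fold_forward ht).1⟩
  · rintro ⟨t', ht'⟩
    obtain ⟨t, htr, -, -⟩ := tr_fold_backward hsub w t' ht'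
    exact ⟨t, htr⟩

/-! ### The safe set and the maximal solution -/

/-- Words `x` such that every plant word whose projection extends `x` by an
uncontrollable word already lies in `S`. -/
def SafeSet (P S : Set (List α)) (Suc Suo : Set α) : Set (List α) :=
  {x | ∀ w ∈ P, ∀ v : List α, (∀ b ∈ v, b ∈ Suc) → proj Suo w = x ++ v → w ∈ S}

lemma mem_prefCl_iff {G : Set (List α)} {w : List α} :
    w ∈ prefCl G ↔ ∀ p, p <+: w → p ∈ G :=
  ⟨fun h p hp => h.2 p hp, fun h => ⟨h w List.prefix_rfl, h⟩⟩

lemma prefCl_isPrefixClosed (G : Set (List α)) : IsPrefixClosed (prefCl G) := by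
  rintro u ⟨v, hv⟩
  rw [mem_prefCl_iff] at hv ⊢
  exact fun p hp => hv p (hp.trans ⟨v, rfl⟩)

lemma safe_of_ext (hsub : Suo ⊆ Suc)
    (hCext : P ∩ ExtL (Fold Suo C) Suc = S)
    {x : List α} (hx : x ∈ ExtL C Suc) : x ∈ SafeSet P S Suc Suo := by
  intro w hwP v hv hproj
  obtain ⟨t, ht⟩ := hx
  obtain ⟨t', ht'⟩ := tr_ext ht v hv
  have hpw : proj Suo w ∈ ExtL C Suc := by rw [hproj]; exact ⟨t', ht'⟩
  have hw : w ∈ ExtL (Fold Suo C) Suc := (extFold_iff hsub w).2 hpw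
  exact hCext ▸ ⟨hwP, hw⟩

end Aux

/-- For `Σuo ⊆ Σuc`, if the equation is solvable under partial controllability and
observability, then it has a largest such solution. -/
theorem pco_largest (P S : Set (List α)) (Suc Suo : Set α) (hsub : Suo ⊆ Suc)
    (h : ∃ C : Set (List α), IsPrefixClosed C ∧ P ∩ C = S ∧ P ∩ ExtL (Fold Suo C) Suc = S) :
    ∃ M : Set (List α), IsPrefixClosed M ∧ P ∩ M = S ∧ P ∩ ExtL (Fold Suo M) Suc = S ∧
      ∀ C : Set (List α), IsPrefixClosed C → P ∩ C = S →
        P ∩ ExtL (Fold Suo C) Suc = S → C ⊆ M := by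
  classical
  obtain ⟨C, hCpc, hCeq, hCext⟩ := h
  have hSP : S ⊆ P := by rw [← hCeq]; exact fun w hw => hw.1
  have hSC : S ⊆ C := by rw [← hCeq]; exact fun w hw => hw.2
  have hPS : ∀ w ∈ P, w ∈ ExtL (Fold Suo C) Suc → w ∈ S := by
    intro w hw hx
    rw [← hCext]; exact ⟨hw, hx⟩
  have hSx : ∀ w ∈ S, proj Suo w ∈ ExtL C Suc := by
    intro w hw
    have hw' : w ∈ P ∩ ExtL (Fold Suo C) Suc := by rw [hCext]; exact hw
    exact (extFold_iff hsub w).1 hw'.2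
  set G : Set (List α) :=
    (Pᶜ ∪ S) ∩ {x | proj Suo x = x → x ∈ SafeSet P S Suc Suo} with hG
  -- maximality
  have hMax : ∀ C' : Set (List α), IsPrefixClosed C' → P ∩ C' = S →
      P ∩ ExtL (Fold Suo C') Suc = S → C' ⊆ prefCl G := by
    intro C' h1 h2 h3 w hw
    rw [mem_prefCl_iff]
    intro p hp
    obtain ⟨v, rfl⟩ := hp
    have hpC' : p ∈ C' := h1 ⟨v, hw⟩
    constructor
    · by_cases hpP : p ∈ P
      · refine Or.inr ?_
        rw [← h2]; exact ⟨hpP, hpC'⟩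
      · exact Or.inl hpP
    · intro _
      exact safe_of_ext hsub h3 ⟨p, tr_self h1 hpC'⟩
  -- the equation P ∩ M = S
  have hPMeq : P ∩ prefCl G = S := by
    apply Set.Subset.antisymm
    · rintro w ⟨hwP, hwM⟩
      rcases hwM.1.1 with h' | h'
      · exact absurd hwP h'
      · exact h'
    · intro w hw
      exact ⟨hSP hw, hMax C hCpc hCeq hCext (hSC hw)⟩
  -- uncontrollable observable extensions stay in M
  have hK1 : ∀ y ∈ prefCl G, ∀ a ∈ Suc, a ∉ Suo → proj Suo y = y →
      y ++ [a] ∈ prefCl G := by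
    intro y hy a haS haO hyobs
    have hySafe : y ∈ SafeSet P S Suc Suo := hy.1.2 hyobs
    rw [mem_prefCl_iff]
    intro p hp
    rcases prefix_snoc hp with hp | rfl
    · exact hy.2 p hp
    · constructor
      · by_cases hP : y ++ [a] ∈ P
        · refine Or.inr (hySafe _ hP [a] ?_ ?_)
          · intro b hb
            rw [List.mem_singleton] at hb
            subst hb; exact haS
          · rw [proj_snoc_not_mem haO, hyobs]
        · exact Or.inl hP
      · intro _
        intro u huP v hv hproj
        refine hySafe u huP ([a] ++ v) ?_ ?_
        · intro b hb
          rcases List.mem_append.1 hb with hb | hb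
          · rw [List.mem_singleton] at hb
            subst hb; exact haS
          · exact hv b hb
        · rw [hproj, List.append_assoc]
  have hnilM : ([] : List α) ∈ prefCl G := by
    rw [mem_prefCl_iff]
    intro p hp
    rw [List.prefix_nil] at hp
    subst hp
    constructor
    · by_cases hP : ([] : List α) ∈ P
      · exact Or.inr (hPS [] hP ⟨[], Tr.nil⟩)
      · exact Or.inl hP
    · intro _
      exact safe_of_ext hsub hCext ⟨[], Tr.nil⟩
  -- traces of observable words in M are total keeps
  have hK3 : ∀ {x t : List α}, Tr (prefCl G) Suc x t → proj Suo x = x →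
      t = x ∧ x ∈ prefCl G := by
    intro x t h
    induction h with
    | nil => exact fun _ => ⟨rfl, hnilM⟩
    | @keep p s a h hmem ih =>
      intro hobs
      obtain ⟨hpobs, ha⟩ := snoc_obs hobs
      obtain ⟨rfl, hpM⟩ := ih hpobs
      exact ⟨rfl, hmem⟩
    | @drop p s a h hnot hS ih =>
      intro hobs
      obtain ⟨hpobs, ha⟩ := snoc_obs hobs
      obtain ⟨rfl, hpM⟩ := ih hpobs
      exact absurd (hK1 s hpM a hS ha hpobs) hnot
  -- the closed-loop equation for M
  have hExtEq : P ∩ ExtL (Fold Suo (prefCl G)) Suc = S := by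
    apply Set.Subset.antisymm
    · rintro w ⟨hwP, hwE⟩
      have hpw : proj Suo w ∈ ExtL (prefCl G) Suc := (extFold_iff hsub w).1 hwE
      obtain ⟨t, ht⟩ := hpw
      obtain ⟨-, hM⟩ := hK3 ht (proj_proj w)
      have hSafe : proj Suo w ∈ SafeSet P S Suc Suo := hM.1.2 (proj_proj w)
      exact hSafe w hwP [] (by simp) (by simp)
    · intro w hw
      refine ⟨hSP hw, ?_⟩
      have hpM : proj Suo w ∈ prefCl G := by
        rw [mem_prefCl_iff]
        intro x hx
        have hxobs : proj Suo x = x := obs_of_prefix hx (proj_proj w)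
        obtain ⟨t', ht'⟩ := hSx w hw
        obtain ⟨q, hq⟩ := hx
        rw [← hq] at ht'
        obtain ⟨s, hs⟩ := tr_prefix q ht'
        have hxSafe := safe_of_ext hsub hCext ⟨s, hs⟩
        constructor
        · by_cases hP : x ∈ P
          · exact Or.inr (hxSafe x hP [] (by simp)
              (by rw [hxobs, List.append_nil]))
          · exact Or.inl hP
        · exact fun _ => hxSafe
      exact (extFold_iff hsub w).2 ⟨proj Suo w, tr_self (prefCl_isPrefixClosed G) hpM⟩
  exact ⟨prefCl G, prefCl_isPrefixClosed G, hPMeq, hExtEq, hMax⟩
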